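/- Let H be a finite dimensional quasi-Hopf algebra with distinguished grouplike element μ ∈ Alg(H,k). Then for every left cointegral λ on H and all h, h' ∈ H: λ(S⁻¹(h)h') = ∑ μ(h₁) λ(h'S(h₂)). -/

import Mathlib

/-!
Write `P(h)` as the partial trace, over the second tensor factor, of `e ↦ (id ⊗ R_h) A(e)` with
`A(e) = ∑ X¹e₁ ⊗ β S(S(X²e₂) α X³)`. Cyclicity of the partial trace, quasi-coassociativity and
the antipode axioms `S(h₁) α h₂ = ε(h) α`, `h₁ β S(h₂) = ε(h) β` show that `P` takes values in
the left integrals; cyclicity together with `A(e y) = A(e) (id ⊗ S²)(Δ y)` gives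
`P(g y) = ∑ P(S²(y₂) g) y₁`. Using the defining property of `λ` twice and `t y₁ = μ(y₁) t` for left
integrals `t`:
`λ(S⁻¹(h) h') = λ(S⁻¹ P(S(h') h)) = ∑ μ(h₁) λ(S⁻¹ P(S(h' S(h₂)))) = ∑ μ(h₁) λ(h' S(h₂))`.
-/

set_option autoImplicit false

open TensorProduct

/-- A quasi-bialgebra in the sense of Drinfeld. The reassociator `Phi` lives in
`H ⊗ (H ⊗ H)`, and `(Δ ⊗ id)` is transported along the associator. -/
structure QuasiBialgebra (k H : Type*) [Field k] [Ring H] [Algebra k H] where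
  comul : H →ₐ[k] H ⊗[k] H
  counit : H →ₐ[k] k
  Phi : H ⊗[k] (H ⊗[k] H)
  PhiInv : H ⊗[k] (H ⊗[k] H)
  Phi_invertible : Phi * PhiInv = 1
  invertible_Phi : PhiInv * Phi = 1
  quasi_coassoc : ∀ h : H,
    (Algebra.TensorProduct.map (AlgHom.id k H) comul) (comul h) * Phi
      = Phi * (Algebra.TensorProduct.assoc k k k H H H)
          ((Algebra.TensorProduct.map comul (AlgHom.id k H)) (comul h))
  counit_right : ∀ h : H,
    (Algebra.TensorProduct.map (AlgHom.id k H) counit) (comul h) = h ⊗ₜ[k] 1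
  counit_left : ∀ h : H,
    (Algebra.TensorProduct.map counit (AlgHom.id k H)) (comul h) = 1 ⊗ₜ[k] h
  pentagon :
    (1 ⊗ₜ[k] Phi)
      * (Algebra.TensorProduct.map (AlgHom.id k H)
          ((Algebra.TensorProduct.assoc k k k H H H).toAlgHom.comp
            (Algebra.TensorProduct.map comul (AlgHom.id k H)))) Phi
      * (Algebra.TensorProduct.map (AlgHom.id k H)
            (Algebra.TensorProduct.assoc k k k H H H).toAlgHom)
          ((Algebra.TensorProduct.assoc k k k H (H ⊗[k] H) H) (Phi ⊗ₜ[k] 1))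
    = (Algebra.TensorProduct.map (AlgHom.id k H)
        (Algebra.TensorProduct.map (AlgHom.id k H) comul)) Phi
      * (Algebra.TensorProduct.assoc k k k H H (H ⊗[k] H))
          ((Algebra.TensorProduct.map comul (AlgHom.id k (H ⊗[k] H))) Phi)
  counit_mid_Phi :
    (Algebra.TensorProduct.map (AlgHom.id k H)
      (Algebra.TensorProduct.map counit (AlgHom.id k H))) Phi = 1

/-- A quasi-Hopf algebra: a quasi-bialgebra with an algebra anti-homomorphism `S`
and elements `alpha`, `beta` satisfying Drinfeld's antipode axioms.  Bijectivity
of `S` is *not* assumed. -/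
structure QuasiHopfAlgebra (k H : Type*) [Field k] [Ring H] [Algebra k H] extends
    QuasiBialgebra k H where
  S : H →ₗ[k] H
  alpha : H
  beta : H
  S_one : S 1 = 1
  S_mul : ∀ a b : H, S (a * b) = S b * S a
  antipode_left : ∀ h : H,
    (LinearMap.mul' k H)
      ((TensorProduct.map ((LinearMap.mulRight k alpha) ∘ₗ S) LinearMap.id) (comul h))
      = counit h • alpha
  antipode_right : ∀ h : H,
    (LinearMap.mul' k H)
      ((TensorProduct.map LinearMap.id ((LinearMap.mulLeft k beta) ∘ₗ S)) (comul h))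
      = counit h • beta
  antipode_Phi :
    (LinearMap.mul' k H)
      ((TensorProduct.map LinearMap.id
        ((LinearMap.mul' k H) ∘ₗ (TensorProduct.map
          ((LinearMap.mulRight k alpha) ∘ₗ ((LinearMap.mulLeft k beta) ∘ₗ S))
          LinearMap.id))) Phi) = 1
  antipode_PhiInv :
    (LinearMap.mul' k H)
      ((TensorProduct.map ((LinearMap.mulRight k alpha) ∘ₗ S)
        ((LinearMap.mul' k H) ∘ₗ (TensorProduct.map (LinearMap.mulRight k beta) S)))
        PhiInv) = 1

namespace QuasiHopfAlgebra

variable {k H : Type*} [Field k] [Ring H] [Algebra k H] (Q : QuasiHopfAlgebra k H)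

/-- The space of left integrals in `H`. -/
def leftIntegrals : Submodule k H where
  carrier := {t | ∀ h : H, h * t = Q.counit h • t}
  add_mem' := by intro a b ha hb h; rw [mul_add, ha h, hb h, smul_add]
  zero_mem' := by intro h; simp
  smul_mem' := by intro c x hx h; rw [mul_smul_comm, hx h, smul_comm]

/-- The space of right integrals in `H`. -/
def rightIntegrals : Submodule k H where
  carrier := {t | ∀ h : H, t * h = Q.counit h • t}
  add_mem' := by intro a b ha hb h; rw [add_mul, ha h, hb h, smul_add]
  zero_mem' := by intro h; simp
  smul_mem' := by intro c x hx h; rw [smul_mul_assoc, hx h, smul_comm]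

/-- The element `p_R = ∑ x¹ ⊗ x² β S(x³)`. -/
noncomputable def pR : H ⊗[k] H :=
  (TensorProduct.map LinearMap.id
    ((LinearMap.mul' k H) ∘ₗ (TensorProduct.map (LinearMap.mulRight k Q.beta) Q.S)))
    Q.PhiInv

/-- The element `∑ X¹ t₁ ⊗ S(X² t₂) α X³` built from a (left integral) `t`. -/
noncomputable def Tel (t : H) : H ⊗[k] H :=
  (TensorProduct.map LinearMap.id
    ((LinearMap.mul' k H) ∘ₗ
      (TensorProduct.map ((LinearMap.mulRight k Q.alpha) ∘ₗ Q.S) LinearMap.id)))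
    (Q.Phi * (Algebra.TensorProduct.assoc k k k H H H) (Q.comul t ⊗ₜ[k] 1))

end QuasiHopfAlgebra

namespace QuasiHopfAlgebra

variable {k H : Type*} [Field k] [Ring H] [Algebra k H] (Q : QuasiHopfAlgebra k H)

/-- The map `e ↦ ∑ X¹e₁ ⊗ β S(S(X²e₂) α X³)`. -/
noncomputable def Amap : H →ₗ[k] H ⊗[k] H :=
  (TensorProduct.map LinearMap.id
      ((LinearMap.mulLeft k Q.beta) ∘ₗ Q.S ∘ₗ (LinearMap.mul' k H) ∘ₗ
        (TensorProduct.map ((LinearMap.mulRight k Q.alpha) ∘ₗ Q.S) LinearMap.id))) ∘ₗ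
    (LinearMap.mulLeft k Q.Phi) ∘ₗ
    (Algebra.TensorProduct.assoc k k k H H H).toLinearMap ∘ₗ
    ((TensorProduct.mk k (H ⊗[k] H) H).flip 1) ∘ₗ
    Q.comul.toLinearMap

/-- The Panaite–Van Oystaeyen projection
`P(h) = ∑ᵢ ⟨eⁱ, β S(S(X²(eᵢ)₂) α X³) h⟩ X¹ (eᵢ)₁` onto the space of left
integrals, written via the coevaluation element `∑ᵢ eᵢ ⊗ eⁱ`. -/
noncomputable def P [FiniteDimensional k H] (h : H) : H :=
  (TensorProduct.rid k H)
    ((TensorProduct.map LinearMap.id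
        ((contractRight k H) ∘ₗ
          (TensorProduct.map (LinearMap.mulRight k h) LinearMap.id)))
      ((TensorProduct.assoc k H H (Module.Dual k H))
        ((TensorProduct.map Q.Amap LinearMap.id) (coevaluation k H 1))))

end QuasiHopfAlgebra

section MulLeftRight

variable {R A : Type*} [CommSemiring R] [NonUnitalNonAssocSemiring A] [Module R A]

theorem LinearMap.mulLeft_add [SMulCommClass R A A] (a b : A) :
    LinearMap.mulLeft R (a + b) = LinearMap.mulLeft R a + LinearMap.mulLeft R b :=
  LinearMap.ext fun x => add_mul a b x

theorem LinearMap.mulLeft_smul [SMulCommClass R A A] [IsScalarTower R A A] (c : R) (a : A) :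
    LinearMap.mulLeft R (c • a) = c • LinearMap.mulLeft R a :=
  LinearMap.ext fun x => smul_mul_assoc c a x

theorem LinearMap.mulRight_add [IsScalarTower R A A] (a b : A) :
    LinearMap.mulRight R (a + b) = LinearMap.mulRight R a + LinearMap.mulRight R b :=
  LinearMap.ext fun x => mul_add x a b

end MulLeftRight

section PartialTrace

variable {k V W : Type*} [Field k] [AddCommGroup V] [Module k V] [FiniteDimensional k V]
  [AddCommGroup W] [Module k W]

noncomputable def partialTrace : (V →ₗ[k] W ⊗[k] V) →ₗ[k] W where
  toFun F := TensorProduct.rid k W ((contractRight k V).lTensor W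
    (TensorProduct.assoc k W V (Module.Dual k V) (F.rTensor _ (coevaluation k V 1))))
  map_add' F G := by simp only [LinearMap.rTensor_add, LinearMap.add_apply, map_add]
  map_smul' c F := by
    simp only [LinearMap.rTensor_smul, LinearMap.smul_apply, map_smul, RingHom.id_apply]

theorem partialTrace_eq_sum (F : V →ₗ[k] W ⊗[k] V) :
    partialTrace F = ∑ i, TensorProduct.rid k W
      (((Module.Basis.ofVectorSpace k V).coord i).lTensor W
        (F (Module.Basis.ofVectorSpace k V i))) := by
  simp only [partialTrace, LinearMap.coe_mk, AddHom.coe_mk, coevaluation_apply_one, map_sum,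
    LinearMap.rTensor_tmul]
  refine Finset.sum_congr rfl fun i _ => ?_
  induction F (Module.Basis.ofVectorSpace k V i) using TensorProduct.induction_on with
  | zero => simp
  | tmul w v => simp
  | add x y hx hy => simp only [add_tmul, map_add, hx, hy]

theorem partialTrace_rTensor_comp {W' : Type*} [AddCommGroup W'] [Module k W']
    (f : W →ₗ[k] W') (F : V →ₗ[k] W ⊗[k] V) :
    partialTrace (f.rTensor V ∘ₗ F) = f (partialTrace F) := by
  simp only [partialTrace_eq_sum, map_sum, LinearMap.comp_apply]
  refine Finset.sum_congr rfl fun i _ => ?_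
  induction F (Module.Basis.ofVectorSpace k V i) using TensorProduct.induction_on with
  | zero => simp
  | tmul w v => simp
  | add x y hx hy => simp only [map_add, hx, hy]

theorem partialTrace_comp (F : V →ₗ[k] W ⊗[k] V) (T : V →ₗ[k] V) :
    partialTrace (F ∘ₗ T) = partialTrace (T.lTensor W ∘ₗ F) := by
  let b := Module.Basis.ofVectorSpace k V
  let tr : Module.Dual k V →ₗ[k] W ⊗[k] V →ₗ[k] W :=
    LinearMap.llcomp k _ _ _ (TensorProduct.rid k W).toLinearMap ∘ₗ LinearMap.lTensorHom W
  have htr : ∀ φ x, tr φ x = TensorProduct.rid k W (φ.lTensor W x) := fun _ _ => rfl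
  have hF : ∀ i, F (T (b i)) = ∑ j, b.repr (T (b i)) j • F (b j) := fun i => by
    simp only [← map_smul, ← map_sum, b.sum_repr]
  calc partialTrace (F ∘ₗ T)
      = ∑ i, tr (b.coord i) (F (T (b i))) := by simp only [partialTrace_eq_sum, htr]; rfl
    _ = ∑ i, ∑ j, b.repr (T (b i)) j • tr (b.coord i) (F (b j)) := by
        simp only [hF, map_sum, map_smul]
    _ = ∑ j, tr (∑ i, (b.coord j ∘ₗ T) (b i) • b.coord i) (F (b j)) := by
        rw [Finset.sum_comm]
        simp only [map_sum, map_smul, LinearMap.sum_apply, LinearMap.smul_apply,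
          LinearMap.comp_apply, Module.Basis.coord_apply]
    _ = ∑ j, tr (b.coord j ∘ₗ T) (F (b j)) := by
        simp only [b.sum_dual_apply_smul_coord]
    _ = partialTrace (T.lTensor W ∘ₗ F) := by
        simp only [partialTrace_eq_sum, htr, LinearMap.lTensor_comp]; rfl

end PartialTrace

namespace QuasiHopfAlgebra

open LinearMap (mulLeft mulRight)
open Algebra.TensorProduct (includeLeft)

variable {k H : Type*} [Field k] [Ring H] [Algebra k H] (Q : QuasiHopfAlgebra k H)

noncomputable def antipodeAlpha : H ⊗[k] H →ₗ[k] H :=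
  LinearMap.mul' k H ∘ₗ TensorProduct.map (mulRight k Q.alpha ∘ₗ Q.S) LinearMap.id

noncomputable def antipodeBeta : H ⊗[k] H →ₗ[k] H :=
  LinearMap.mul' k H ∘ₗ TensorProduct.map LinearMap.id (mulLeft k Q.beta ∘ₗ Q.S)

@[simp] theorem antipodeAlpha_tmul (x y : H) :
    Q.antipodeAlpha (x ⊗ₜ y) = Q.S x * Q.alpha * y := rfl

@[simp] theorem antipodeBeta_tmul (x y : H) :
    Q.antipodeBeta (x ⊗ₜ y) = x * (Q.beta * Q.S y) := rfl

theorem antipodeAlpha_comul (g : H) : Q.antipodeAlpha (Q.comul g) = Q.counit g • Q.alpha :=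
  Q.antipode_left g

theorem antipodeBeta_comul (g : H) : Q.antipodeBeta (Q.comul g) = Q.counit g • Q.beta :=
  Q.antipode_right g

theorem antipodeAlpha_mul_tmul (z : H ⊗[k] H) (v w : H) :
    Q.antipodeAlpha (z * (v ⊗ₜ w)) = Q.S v * Q.antipodeAlpha z * w := by
  induction z using TensorProduct.induction_on with
  | zero => simp
  | tmul x y => simp [Q.S_mul, mul_assoc]
  | add z z' hz hz' => simp [add_mul, mul_add, hz, hz']

theorem lTensor_antipodeAlpha_mul_tmul (Y : H ⊗[k] (H ⊗[k] H)) (u v w : H) :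
    Q.antipodeAlpha.lTensor H (Y * (u ⊗ₜ (v ⊗ₜ w))) =
      TensorProduct.map (mulRight k u)
        (mulLeft k (Q.S v) ∘ₗ mulRight k w) (Q.antipodeAlpha.lTensor H Y) := by
  induction Y using TensorProduct.induction_on with
  | zero => simp
  | tmul a z => simp [Q.antipodeAlpha_mul_tmul, mul_assoc]
  | add Y Y' hY hY' => simp [add_mul, hY, hY']

theorem lTensor_antipodeAlpha_comul_comul (g : H) :
    Q.antipodeAlpha.lTensor H (Algebra.TensorProduct.map (AlgHom.id k H) Q.comul (Q.comul g)) =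
      g ⊗ₜ Q.alpha := by
  have hγ : Q.antipodeAlpha ∘ₗ Q.comul.toLinearMap =
      LinearMap.toSpanSingleton k H Q.alpha ∘ₗ Q.counit.toLinearMap :=
    LinearMap.ext fun x => by simp [Q.antipodeAlpha_comul]
  have hε : Q.counit.toLinearMap.lTensor H (Q.comul g) = g ⊗ₜ 1 := Q.counit_right g
  change Q.antipodeAlpha.lTensor H (Q.comul.toLinearMap.lTensor H (Q.comul g)) = _
  rw [← LinearMap.lTensor_comp_apply, hγ, LinearMap.lTensor_comp_apply, hε]
  simp

theorem lTensor_antipodeAlpha_comul_comul_mul (g : H) (X : H ⊗[k] (H ⊗[k] H)) :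
    Q.antipodeAlpha.lTensor H
        (Algebra.TensorProduct.map (AlgHom.id k H) Q.comul (Q.comul g) * X) =
      (mulLeft k g).rTensor H (Q.antipodeAlpha.lTensor H X) := by
  induction X using TensorProduct.induction_on with
  | zero => simp
  | tmul u z =>
    induction z using TensorProduct.induction_on with
    | zero => simp
    | tmul v w =>
      rw [lTensor_antipodeAlpha_mul_tmul, lTensor_antipodeAlpha_comul_comul]
      simp [mul_assoc]
    | add z z' hz hz' => simp [tmul_add, mul_add, hz, hz']
  | add X X' hX hX' => simp [mul_add, hX, hX']

noncomputable def phiMulComulRTensor : H ⊗[k] H →ₗ[k] H ⊗[k] (H ⊗[k] H) :=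
  mulLeft k Q.Phi ∘ₗ (Algebra.TensorProduct.assoc k k k H H H).toLinearMap ∘ₗ
    (Algebra.TensorProduct.map Q.comul (AlgHom.id k H)).toLinearMap

theorem phiMulComulRTensor_apply (x : H ⊗[k] H) :
    Q.phiMulComulRTensor x = Q.Phi * Algebra.TensorProduct.assoc k k k H H H
      (Algebra.TensorProduct.map Q.comul (AlgHom.id k H) x) := rfl

theorem phiMulComulRTensor_mul (x y : H ⊗[k] H) :
    Q.phiMulComulRTensor (x * y) = Q.phiMulComulRTensor x * Algebra.TensorProduct.assoc k k k H H H
      (Algebra.TensorProduct.map Q.comul (AlgHom.id k H) y) := by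
  simp only [phiMulComulRTensor_apply, map_mul, mul_assoc]

theorem map_comul_comul_mul_phiMulComulRTensor (g : H) (x : H ⊗[k] H) :
    Algebra.TensorProduct.map (AlgHom.id k H) Q.comul (Q.comul g) * Q.phiMulComulRTensor x =
      Q.phiMulComulRTensor (Q.comul g * x) := by
  rw [phiMulComulRTensor_mul, phiMulComulRTensor_apply, phiMulComulRTensor_apply, ← mul_assoc,
    Q.quasi_coassoc]

noncomputable def phiMulComul : H →ₗ[k] H ⊗[k] (H ⊗[k] H) :=
  Q.phiMulComulRTensor ∘ₗ includeLeft.toLinearMap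

theorem phiMulComul_apply (e : H) : Q.phiMulComul e = Q.phiMulComulRTensor (e ⊗ₜ 1) := rfl

theorem Amap_eq :
    Q.Amap = (mulLeft k Q.beta ∘ₗ Q.S ∘ₗ Q.antipodeAlpha).lTensor H ∘ₗ Q.phiMulComul :=
  rfl

theorem phiMulComul_mul (e y : H) :
    Q.phiMulComul (e * y) =
      Q.phiMulComul e * Algebra.TensorProduct.assoc k k k H H H (Q.comul y ⊗ₜ 1) := by
  have hsplit : (e * y) ⊗ₜ[k] (1 : H) = (e ⊗ₜ[k] (1 : H)) * (y ⊗ₜ[k] (1 : H)) := by simp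
  rw [phiMulComul_apply, phiMulComul_apply, hsplit, phiMulComulRTensor_mul,
    Algebra.TensorProduct.map_tmul,
    AlgHom.id_apply]

theorem Amap_mul (e y : H) :
    Q.Amap (e * y) = Q.Amap e * (Q.S ∘ₗ Q.S).lTensor H (Q.comul y) := by
  rw [Amap_eq, LinearMap.comp_apply, LinearMap.comp_apply, phiMulComul_mul]
  generalize Q.phiMulComul e = X
  induction Q.comul y using TensorProduct.induction_on with
  | zero => simp
  | tmul a c =>
    simp only [Algebra.TensorProduct.assoc_tmul, LinearMap.lTensor_comp_apply,
      lTensor_antipodeAlpha_mul_tmul]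
    induction Q.antipodeAlpha.lTensor H X using TensorProduct.induction_on with
    | zero => simp
    | tmul x z => simp [Q.S_mul, mul_assoc]
    | add Y Y' hY hY' => simp only [map_add, add_mul, hY, hY']
  | add t t' ht ht' => simp only [add_tmul, map_add, mul_add, ht, ht']

theorem lTensor_phiMulComulRTensor_mulLeft_tmul (y m p q : H) :
    (mulRight k y ∘ₗ mulLeft k m ∘ₗ Q.S ∘ₗ Q.antipodeAlpha).lTensor H ∘ₗ
        Q.phiMulComulRTensor ∘ₗ mulLeft k (p ⊗ₜ q) ∘ₗ
          includeLeft.toLinearMap =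
      (mulRight k y ∘ₗ mulLeft k (m * Q.S q) ∘ₗ Q.S ∘ₗ Q.antipodeAlpha).lTensor H
        ∘ₗ Q.phiMulComul ∘ₗ mulLeft k p := by
  have hlTensor : ∀ Y : H ⊗[k] H,
      (mulRight k y ∘ₗ mulLeft k m ∘ₗ Q.S).lTensor H
        (TensorProduct.map (mulRight k 1)
          (mulLeft k (Q.S 1) ∘ₗ mulRight k q) Y) =
      (mulRight k y ∘ₗ mulLeft k (m * Q.S q) ∘ₗ Q.S).lTensor H Y := by
    intro Y
    induction Y using TensorProduct.induction_on with
    | zero => simp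
    | tmul a x => simp [Q.S_mul, Q.S_one, mul_assoc]
    | add Y Y' hY hY' => simp only [map_add, hY, hY']
  ext e
  have hsplit : (p ⊗ₜ[k] q) * (e ⊗ₜ 1) = ((p * e) ⊗ₜ[k] (1 : H)) * (1 ⊗ₜ q) := by
    simp
  simp only [LinearMap.comp_apply, LinearMap.mulLeft_apply, AlgHom.toLinearMap_apply,
    Algebra.TensorProduct.includeLeft_apply, hsplit, phiMulComulRTensor_mul]
  rw [Algebra.TensorProduct.map_tmul, map_one, AlgHom.id_apply, Algebra.TensorProduct.one_def,
    Algebra.TensorProduct.assoc_tmul]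
  rw [← LinearMap.comp_assoc Q.antipodeAlpha Q.S, ← LinearMap.comp_assoc Q.antipodeAlpha,
    LinearMap.lTensor_comp_apply, lTensor_antipodeAlpha_mul_tmul, hlTensor,
    ← LinearMap.lTensor_comp_apply]
  rfl

section FiniteDimensional

variable [FiniteDimensional k H]

theorem P_eq_partialTrace (h : H) :
    Q.P h = partialTrace ((mulRight k h).lTensor H ∘ₗ Q.Amap) := by
  rw [partialTrace_eq_sum, P, coevaluation_apply_one]
  simp only [map_sum, TensorProduct.map_tmul, LinearMap.id_coe, id_eq, LinearMap.comp_apply]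
  refine Finset.sum_congr rfl fun i _ => ?_
  generalize Q.Amap _ = u
  induction u using TensorProduct.induction_on with
  | zero => simp
  | tmul x y => simp
  | add x y hx hy => simp only [add_tmul, map_add, hx, hy]

theorem P_eq_partialTrace_phiMulComul (y : H) :
    Q.P y = partialTrace ((mulRight k y ∘ₗ mulLeft k Q.beta ∘ₗ Q.S ∘ₗ
      Q.antipodeAlpha).lTensor H ∘ₗ Q.phiMulComul) := by
  rw [P_eq_partialTrace, Amap_eq, ← LinearMap.comp_assoc, ← LinearMap.lTensor_comp]

/-- For `z = p ⊗ q`, cyclicity moves the left multiplication by `p` from the input `e` to the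
coefficient, where it combines with `β S(q)` into `p β S(q)`. -/
theorem partialTrace_phiMulComulRTensor_mulLeft (y : H) (z : H ⊗[k] H) :
    partialTrace ((mulRight k y ∘ₗ mulLeft k Q.beta ∘ₗ Q.S ∘ₗ
        Q.antipodeAlpha).lTensor H ∘ₗ Q.phiMulComulRTensor ∘ₗ mulLeft k z ∘ₗ
          includeLeft.toLinearMap) =
      partialTrace ((mulRight k y ∘ₗ mulLeft k (Q.antipodeBeta z) ∘ₗ Q.S ∘ₗ
        Q.antipodeAlpha).lTensor H ∘ₗ Q.phiMulComul) := by
  induction z using TensorProduct.induction_on with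
  | zero => simp
  | tmul p q =>
    rw [lTensor_phiMulComulRTensor_mulLeft_tmul, ← LinearMap.comp_assoc, partialTrace_comp,
      ← LinearMap.comp_assoc, ← LinearMap.lTensor_comp]
    congr 3
    ext x
    simp [mul_assoc]
  | add z z' hz hz' =>
    simp only [map_add, LinearMap.mulLeft_add, LinearMap.comp_add, LinearMap.add_comp,
      LinearMap.lTensor_add, hz, hz']

theorem mul_P (g y : H) : g * Q.P y = Q.counit g • Q.P y := by
  set f := mulRight k y ∘ₗ mulLeft k Q.beta ∘ₗ Q.S
  have hcomul :
      (mulLeft k g).rTensor H ∘ₗ (f ∘ₗ Q.antipodeAlpha).lTensor H ∘ₗ Q.phiMulComul =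
        (f ∘ₗ Q.antipodeAlpha).lTensor H ∘ₗ Q.phiMulComulRTensor ∘ₗ
          mulLeft k (Q.comul g) ∘ₗ includeLeft.toLinearMap := by
    ext e
    simp only [LinearMap.comp_apply, LinearMap.lTensor_comp_apply]
    rw [← LinearMap.comp_apply ((mulLeft k g).rTensor H), LinearMap.rTensor_comp_lTensor,
      ← LinearMap.lTensor_comp_rTensor, LinearMap.comp_apply,
      ← lTensor_antipodeAlpha_comul_comul_mul, phiMulComul_apply,
      map_comul_comul_mul_phiMulComulRTensor]
    rfl
  calc g * Q.P y
      = partialTrace ((mulLeft k g).rTensor H ∘ₗ (f ∘ₗ Q.antipodeAlpha).lTensor H ∘ₗ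
          Q.phiMulComul) := by
        rw [partialTrace_rTensor_comp, P_eq_partialTrace_phiMulComul]; rfl
    _ = partialTrace ((mulRight k y ∘ₗ mulLeft k (Q.antipodeBeta (Q.comul g)) ∘ₗ
          Q.S ∘ₗ Q.antipodeAlpha).lTensor H ∘ₗ Q.phiMulComul) := by
        rw [hcomul]; exact Q.partialTrace_phiMulComulRTensor_mulLeft y (Q.comul g)
    _ = Q.counit g • Q.P y := by
        simp only [antipodeBeta_comul, LinearMap.mulLeft_smul, LinearMap.comp_smul,
          LinearMap.smul_comp, LinearMap.lTensor_smul, map_smul, P_eq_partialTrace_phiMulComul]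

theorem P_mem_leftIntegrals (y : H) : Q.P y ∈ Q.leftIntegrals := fun g => Q.mul_P g y

noncomputable def Pₗ : H →ₗ[k] H :=
  partialTrace ∘ₗ (LinearMap.llcomp k H (H ⊗[k] H) (H ⊗[k] H)).flip Q.Amap ∘ₗ
    LinearMap.lTensorHom H ∘ₗ (LinearMap.mul k H).flip

theorem Pₗ_apply (h : H) : Q.Pₗ h = Q.P h := (Q.P_eq_partialTrace h).symm

theorem P_mul (g y : H) :
    Q.P (g * y) = TensorProduct.lift ((LinearMap.mul k H).flip.compl₂
      (Q.Pₗ ∘ₗ mulRight k g ∘ₗ Q.S ∘ₗ Q.S)) (Q.comul y) := by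
  have hAmap : ((mulRight k g).lTensor H ∘ₗ Q.Amap) ∘ₗ mulRight k y =
      (mulRight k g).lTensor H ∘ₗ
        mulRight k ((Q.S ∘ₗ Q.S).lTensor H (Q.comul y)) ∘ₗ Q.Amap :=
    LinearMap.ext fun e => by simp [Amap_mul]
  rw [P_eq_partialTrace, LinearMap.mulRight_mul, LinearMap.lTensor_comp, LinearMap.comp_assoc,
    ← partialTrace_comp, hAmap]
  induction Q.comul y using TensorProduct.induction_on with
  | zero => simp
  | tmul a c =>
    have hsplit : (mulRight k g).lTensor H ∘ₗ
        mulRight k ((Q.S ∘ₗ Q.S).lTensor H (a ⊗ₜ c)) =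
        (mulRight k a).rTensor H ∘ₗ
          (mulRight k (Q.S (Q.S c) * g)).lTensor H := by
      ext x z
      simp [mul_assoc]
    rw [← LinearMap.comp_assoc, hsplit, LinearMap.comp_assoc, partialTrace_rTensor_comp,
      ← P_eq_partialTrace]
    simp [Pₗ_apply]
  | add t t' ht ht' =>
    simp only [map_add, LinearMap.mulRight_add, LinearMap.add_comp,
      LinearMap.comp_add, ht, ht']

end FiniteDimensional

end QuasiHopfAlgebra

theorem cointegral_Sinv_formula_general {k H : Type*} [Field k] [Ring H] [Algebra k H]
    [FiniteDimensional k H] (Q : QuasiHopfAlgebra k H)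
    (Sinv : H →ₗ[k] H) (hS2 : ∀ a, Q.S (Sinv a) = a)
    (μ : H →ₐ[k] k) (hμ : ∀ t ∈ Q.leftIntegrals, ∀ h : H, t * h = μ h • t)
    (lam : Module.Dual k H) (hlam : ∀ h : H, lam h = lam (Sinv (Q.P (Q.S h)))) :
    ∀ h h' : H,
      lam (Sinv h * h') =
        (LinearMap.mul' k k)
          ((TensorProduct.map μ.toLinearMap
            (lam ∘ₗ (LinearMap.mulLeft k h') ∘ₗ Q.S)) (Q.comul h)) := by
  intro h h'
  have hterm : ∀ a c : H,
      Q.P (Q.S (Q.S c) * Q.S h') * a = μ a • Q.P (Q.S (h' * Q.S c)) := fun a c => by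
    rw [hμ _ (Q.P_mem_leftIntegrals _), Q.S_mul]
  rw [hlam, Q.S_mul, hS2, Q.P_mul]
  induction Q.comul h using TensorProduct.induction_on with
  | zero => simp
  | tmul a c => simp [Q.Pₗ_apply, hterm, ← hlam]
  | add t t' ht ht' => simp only [map_add, ht, ht']

/-- for a left cointegral `λ` (characterized by
`⟨λ, h⟩ = ⟨λ, S⁻¹(P(S h))⟩`), one has `λ(S⁻¹(h) h') = ∑ μ(h₁) λ(h' S(h₂))`. -/
theorem cointegral_Sinv_formula {k H : Type*} [Field k] [Ring H] [Algebra k H]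
    [FiniteDimensional k H] (Q : QuasiHopfAlgebra k H)
    (Sinv : H →ₗ[k] H) (hS1 : ∀ a, Sinv (Q.S a) = a) (hS2 : ∀ a, Q.S (Sinv a) = a)
    (μ : H →ₐ[k] k) (hμ : ∀ t ∈ Q.leftIntegrals, ∀ h : H, t * h = μ h • t)
    (lam : Module.Dual k H) (hlam : ∀ h : H, lam h = lam (Sinv (Q.P (Q.S h)))) :
    ∀ h h' : H,
      lam (Sinv h * h') =
        (LinearMap.mul' k k)
          ((TensorProduct.map μ.toLinearMap
            (lam ∘ₗ (LinearMap.mulLeft k h') ∘ₗ Q.S)) (Q.comul h)) :=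
  cointegral_Sinv_formula_general Q Sinv hS2 μ hμ lam hlam
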